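/- Let a, b, c ∈ [0,1]. There exists a distribution P on (ZMod 2)^2 with edge marginals d₂P = a, d₀P = b and d₁P = c if and only if |a + b − 1| ≤ c ≤ 1 − |a − b|. Consequently, for every a, b ∈ [0,1] there exists a distribution P on (ZMod 2)^2 with d₂P = a and d₀P = b; that is, every distribution on the horn Λ²₁ extends to the 2-simplex. -/

import Mathlib

/-!
A distribution `P` with `d₂P = a` and `d₀P = b` is determined by `t = P(0,0)`: it is the
table `t, a - t; b - t, 1 - a - b + t`, whose `d₁` marginal is `1 - a - b + 2t`. Nonnegativity
of the table says exactly `max 0 (a + b - 1) ≤ t ≤ min a b`, which translates into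
`|a + b - 1| ≤ d₁P ≤ 1 - |a - b|`. For the horn, the independent coupling `t = a b` works.
-/

open Finset

/-- A distribution on `(ZMod 2)²`: nonnegative with total mass 1. -/
def IsDist2 (p : ZMod 2 → ZMod 2 → ℝ) : Prop :=
  (∀ a b, 0 ≤ p a b) ∧ (∑ a : ZMod 2, ∑ b : ZMod 2, p a b = 1)

/-- The `d₀` edge marginal (at outcome `0`) of a distribution on a triangle. -/
def faceD0 (p : ZMod 2 → ZMod 2 → ℝ) : ℝ := p 0 0 + p 1 0

/-- The `d₁` edge marginal (at outcome `0`) of a distribution on a triangle. -/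
def faceD1 (p : ZMod 2 → ZMod 2 → ℝ) : ℝ := p 0 0 + p 1 1

/-- The `d₂` edge marginal (at outcome `0`) of a distribution on a triangle. -/
def faceD2 (p : ZMod 2 → ZMod 2 → ℝ) : ℝ := p 0 0 + p 0 1

theorem isDist2_iff (p : ZMod 2 → ZMod 2 → ℝ) :
    IsDist2 p ↔ (∀ a b, 0 ≤ p a b) ∧ p 0 0 + p 0 1 + p 1 0 + p 1 1 = 1 := by
  have sum_two (f : ZMod 2 → ℝ) : ∑ x, f x = f 0 + f 1 := Fin.sum_univ_two f
  simp only [IsDist2, sum_two, ← add_assoc]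

theorem IsDist2.abs_faceD2_add_faceD0_sub_one_le_faceD1 {p : ZMod 2 → ZMod 2 → ℝ}
    (hp : IsDist2 p) : |faceD2 p + faceD0 p - 1| ≤ faceD1 p := by
  obtain ⟨h, hsum⟩ := (isDist2_iff p).mp hp
  simp only [faceD0, faceD1, faceD2]
  rw [abs_le]
  constructor <;> linarith [h 0 0, h 0 1, h 1 0, h 1 1]

theorem IsDist2.faceD1_le_one_sub_abs_faceD2_sub_faceD0 {p : ZMod 2 → ZMod 2 → ℝ}
    (hp : IsDist2 p) : faceD1 p ≤ 1 - |faceD2 p - faceD0 p| := by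
  obtain ⟨h, hsum⟩ := (isDist2_iff p).mp hp
  simp only [faceD0, faceD1, faceD2]
  rw [le_sub_comm, abs_le]
  constructor <;> linarith [h 0 1, h 1 0]

def coupling (a b t : ℝ) : ZMod 2 → ZMod 2 → ℝ := fun x y =>
  if x = 0 then (if y = 0 then t else a - t) else (if y = 0 then b - t else 1 - a - b + t)

section coupling

variable {a b t : ℝ}

@[simp] theorem faceD2_coupling : faceD2 (coupling a b t) = a := by
  simp [faceD2, coupling]

@[simp] theorem faceD0_coupling : faceD0 (coupling a b t) = b := by
  simp [faceD0, coupling]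

@[simp] theorem faceD1_coupling : faceD1 (coupling a b t) = 1 - a - b + 2 * t := by
  simp only [faceD1, coupling, ↓reduceIte, one_ne_zero]
  ring

theorem isDist2_coupling (h₀ : 0 ≤ t) (ha : t ≤ a) (hb : t ≤ b) (hab : a + b - 1 ≤ t) :
    IsDist2 (coupling a b t) := by
  refine (isDist2_iff _).mpr ⟨fun x y => ?_, ?_⟩
  · by_cases hx : x = 0 <;> by_cases hy : y = 0 <;> simp [coupling, hx, hy] <;> linarith
  · simp only [coupling, ↓reduceIte, one_ne_zero, add_sub_cancel]
    ring

end coupling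

theorem exists_isDist2_faces_of_bounds {a b c : ℝ} (hlow : |a + b - 1| ≤ c)
    (hup : c ≤ 1 - |a - b|) :
    ∃ P : ZMod 2 → ZMod 2 → ℝ, IsDist2 P ∧ faceD2 P = a ∧ faceD0 P = b ∧ faceD1 P = c := by
  have h₁ := (neg_le_abs (a + b - 1)).trans hlow
  have h₂ := (le_abs_self (a + b - 1)).trans hlow
  have h₃ := le_abs_self (a - b)
  have h₄ := neg_abs_le (a - b)
  refine ⟨coupling a b ((c + a + b - 1) / 2), isDist2_coupling ?_ ?_ ?_ ?_, by simp, by simp,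
    by rw [faceD1_coupling]; ring⟩ <;> linarith

theorem exists_isDist2_faceD2_faceD0 {a b : ℝ} (ha : a ∈ Set.Icc (0 : ℝ) 1)
    (hb : b ∈ Set.Icc (0 : ℝ) 1) :
    ∃ P : ZMod 2 → ZMod 2 → ℝ, IsDist2 P ∧ faceD2 P = a ∧ faceD0 P = b := by
  obtain ⟨ha₀, ha₁⟩ := ha
  obtain ⟨hb₀, hb₁⟩ := hb
  refine ⟨coupling a b (a * b), isDist2_coupling ?_ ?_ ?_ ?_, by simp, by simp⟩ <;>
    nlinarith [mul_nonneg (sub_nonneg.mpr ha₁) (sub_nonneg.mpr hb₁)]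

theorem triangle_extension :
    (∀ a b c : ℝ, a ∈ Set.Icc (0 : ℝ) 1 → b ∈ Set.Icc (0 : ℝ) 1 → c ∈ Set.Icc (0 : ℝ) 1 →
      ((∃ P : ZMod 2 → ZMod 2 → ℝ,
          IsDist2 P ∧ faceD2 P = a ∧ faceD0 P = b ∧ faceD1 P = c) ↔
        (|a + b - 1| ≤ c ∧ c ≤ 1 - |a - b|))) ∧
    (∀ a b : ℝ, a ∈ Set.Icc (0 : ℝ) 1 → b ∈ Set.Icc (0 : ℝ) 1 →
      ∃ P : ZMod 2 → ZMod 2 → ℝ, IsDist2 P ∧ faceD2 P = a ∧ faceD0 P = b) := by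
  refine ⟨fun a b c _ _ _ => ⟨?_, fun ⟨hlow, hup⟩ => exists_isDist2_faces_of_bounds hlow hup⟩,
    fun a b ha hb => exists_isDist2_faceD2_faceD0 ha hb⟩
  rintro ⟨P, hP, rfl, rfl, rfl⟩
  exact ⟨hP.abs_faceD2_add_faceD0_sub_one_le_faceD1, hP.faceD1_le_one_sub_abs_faceD2_sub_faceD0⟩
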